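/- arXiv:2109.01221 — 4 statements merged into one kernel-verified Lean document; each statement's English description precedes it below -/
import Mathlib

section
/- Let D be a finite nonempty set of integers. There exists a signed tree (T,s), where T is a finite tree with at least two vertices, that realizes D if and only if 1 ∈ D or −1 ∈ D. -/
/-- A signed tree: a finite tree (on vertex type `Fin n`) together with an
assignment of a sign to each possible edge (`true` = positive, `false` = negative). -/
structure SignedTree where
  n : ℕ
  G : SimpleGraph (Fin n)
  adjDec : DecidableRel G.Adj
  isTree : G.IsTree
  sgn : Sym2 (Fin n) → Bool

namespace SignedTree

/-- The (unsigned) degree of a vertex in the underlying tree. -/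
def deg (T : SignedTree) (v : Fin T.n) : ℕ :=
  letI := T.adjDec
  T.G.degree v

/-- The signed degree of a vertex: the number of positive edges incident to it
minus the number of negative edges incident to it. -/
def sdeg (T : SignedTree) (v : Fin T.n) : ℤ :=
  letI := T.adjDec
  ((((T.G.neighborFinset v).filter fun w => T.sgn s(v, w) = true).card : ℤ)) -
  ((((T.G.neighborFinset v).filter fun w => T.sgn s(v, w) = false).card : ℤ))

/-- The signed tree `T` realizes the set `D` if `D` is exactly the set of signed
degrees of the vertices of `T`. -/
def Realizes (T : SignedTree) (D : Set ℤ) : Prop :=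
  D = Set.range T.sdeg

end SignedTree

/-- `diamOfSet D` is the minimum diameter of the underlying tree over all
signed trees realizing `D`. -/
noncomputable def diamOfSet (D : Set ℤ) : ℕ :=
  sInf {k : ℕ | ∃ T : SignedTree, T.Realizes D ∧ T.G.diam = k}

/-- `orderOfSet D` is the minimum number of vertices of the underlying tree over
all signed trees realizing `D`. -/
noncomputable def orderOfSet (D : Set ℤ) : ℕ :=
  sInf {k : ℕ | ∃ T : SignedTree, T.Realizes D ∧ T.n = k}

/-!
A tree with at least two vertices has a leaf, and the signed degree of a leaf is `±1`.
Conversely, flipping all signs negates every signed degree, so it suffices to realize a finite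
`D ∋ 1`. Take a root with a positive edge to a head for each `x ∈ D` and one more head of value
`1`, and a negative edge to each of `|D|` further heads carrying two positive leaves; the root
then has signed degree `1`. A head of value `x ≥ 1` gets `x - 1` positive leaves, a head of value
`x < 1` gets `1 - x` negative edges to vertices that again carry two positive leaves. All vertices
other than the heads of value `x` have signed degree `1`.
-/

def signValue (b : Bool) : ℤ := if b then 1 else -1

namespace SimpleGraph

variable {V : Type*}

def parentGraph (r : V) (p : V → V) : SimpleGraph V :=
  fromRel fun v w => v ≠ r ∧ p v = w

variable {r : V} {p : V → V} {h : V → ℕ}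

theorem parentGraph_adj_parent {v : V} (hv : v ≠ r) (hp : h (p v) < h v) :
    (parentGraph r p).Adj v (p v) :=
  (fromRel_adj _ _ _).mpr ⟨fun hvp => hp.ne (congrArg h hvp.symm), .inl ⟨hv, rfl⟩⟩

theorem parentGraph_reachable_root (hp : ∀ v, v ≠ r → h (p v) < h v) (v : V) :
    (parentGraph r p).Reachable v r := by
  induction hv : h v using Nat.strong_induction_on generalizing v with
  | _ n ih =>
    by_cases hvr : v = r
    · exact hvr ▸ .refl _
    · exact (parentGraph_adj_parent hvr (hp v hvr)).reachable.trans
        (ih _ (hv ▸ hp v hvr) _ rfl)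

theorem parentGraph_connected (hp : ∀ v, v ≠ r → h (p v) < h v) :
    (parentGraph r p).Connected :=
  have : Nonempty V := ⟨r⟩
  .mk fun v w => (parentGraph_reachable_root hp v).trans (parentGraph_reachable_root hp w).symm

theorem parent_edge_injective (hp : ∀ v, v ≠ r → h (p v) < h v) :
    Function.Injective fun v : {v // v ≠ r} => s(v.1, p v.1) := by
  rintro ⟨v, hv⟩ ⟨w, hw⟩ hvw
  simp only [Sym2.eq_iff] at hvw
  rcases hvw with ⟨hvw, -⟩ | ⟨hvw, hwv⟩
  · exact Subtype.ext hvw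
  · have h₁ := hp v hv
    have h₂ := hp w hw
    rw [hwv] at h₁
    rw [← hvw] at h₂
    omega

theorem edgeSet_parentGraph (hp : ∀ v, v ≠ r → h (p v) < h v) :
    (parentGraph r p).edgeSet = Set.range fun v : {v // v ≠ r} => s(v.1, p v.1) := by
  ext e
  induction e using Sym2.ind with
  | _ v w =>
  simp only [mem_edgeSet, parentGraph, fromRel_adj, Set.mem_range, Subtype.exists, Sym2.eq_iff]
  constructor
  · rintro ⟨-, ⟨hv, rfl⟩ | ⟨hw, rfl⟩⟩
    · exact ⟨v, hv, .inl ⟨rfl, rfl⟩⟩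
    · exact ⟨w, hw, .inr ⟨rfl, rfl⟩⟩
  · rintro ⟨u, hu, ⟨rfl, rfl⟩ | ⟨rfl, rfl⟩⟩
    · exact ⟨(parentGraph_adj_parent hu (hp u hu)).ne, .inl ⟨hu, rfl⟩⟩
    · exact ⟨(parentGraph_adj_parent hu (hp u hu)).ne.symm, .inr ⟨hu, rfl⟩⟩

theorem parentGraph_isTree [Finite V] (hp : ∀ v, v ≠ r → h (p v) < h v) :
    (parentGraph r p).IsTree := by
  classical
  have := Fintype.ofFinite V
  refine isTree_iff_connected_and_card.mpr ⟨parentGraph_connected hp, ?_⟩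
  rw [edgeSet_parentGraph hp, Nat.card_range_of_injective (parent_edge_injective hp),
    Nat.card_eq_fintype_card, Fintype.card_subtype_compl, Fintype.card_subtype_eq,
    Nat.card_eq_fintype_card]
  have : 0 < Fintype.card V := Fintype.card_pos_iff.mpr ⟨r⟩
  omega

def signedDegree [Fintype V] (G : SimpleGraph V) [DecidableRel G.Adj] (sgn : Sym2 V → Bool)
    (v : V) : ℤ :=
  ∑ w ∈ G.neighborFinset v, signValue (sgn s(v, w))

theorem signedDegree_eq_sum [Fintype V] (G : SimpleGraph V) [DecidableRel G.Adj]
    (sgn : Sym2 V → Bool) (v : V) :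
    G.signedDegree sgn v = ∑ w, if G.Adj v w then signValue (sgn s(v, w)) else 0 := by
  rw [signedDegree, neighborFinset_eq_filter, Finset.sum_filter]

open Classical in
noncomputable def parentSign (r : V) (p : V → V) (σ : V → Bool) (e : Sym2 V) : Bool :=
  decide (∃ v, v ≠ r ∧ e = s(v, p v) ∧ σ v)

theorem parentSign_mk (hp : ∀ v, v ≠ r → h (p v) < h v) (σ : V → Bool) {v : V} (hv : v ≠ r) :
    parentSign r p σ s(v, p v) = σ v := by
  by_cases hσ : σ v <;> simp only [parentSign, hσ, decide_eq_true_eq, decide_eq_false_iff_not]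
  · exact ⟨v, hv, rfl, hσ⟩
  · rintro ⟨w, hw, hvw, hσw⟩
    obtain rfl : v = w := congrArg Subtype.val
      (parent_edge_injective hp (a₁ := ⟨v, hv⟩) (a₂ := ⟨w, hw⟩) hvw)
    exact hσ hσw

theorem parentGraph_adj_iff (hp : ∀ v, v ≠ r → h (p v) < h v) {v w : V} :
    (parentGraph r p).Adj v w ↔ (v ≠ r ∧ p v = w) ∨ (w ≠ r ∧ p w = v) := by
  refine ⟨fun hvw => ((fromRel_adj _ _ _).mp hvw).2, ?_⟩
  rintro (⟨hv, rfl⟩ | ⟨hw, rfl⟩)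
  · exact parentGraph_adj_parent hv (hp v hv)
  · exact (parentGraph_adj_parent hw (hp w hw)).symm

theorem signedDegree_parentGraph [Fintype V] [DecidableEq V] [DecidableRel (parentGraph r p).Adj]
    (hp : ∀ v, v ≠ r → h (p v) < h v) (σ : V → Bool) (v : V) :
    (parentGraph r p).signedDegree (parentSign r p σ) v =
      (if v = r then 0 else signValue (σ v)) +
        ∑ c with c ≠ r ∧ p c = v, signValue (σ c) := by
  have hsplit : ∀ w, (if (parentGraph r p).Adj v w then signValue (parentSign r p σ s(v, w)) else 0)
      = (if v ≠ r ∧ p v = w then signValue (σ v) else 0) +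
        (if w ≠ r ∧ p w = v then signValue (σ w) else 0) := by
    intro w
    by_cases h₁ : v ≠ r ∧ p v = w
    · obtain ⟨hv, rfl⟩ := h₁
      have hpp : ¬ (p v ≠ r ∧ p (p v) = v) := fun ⟨hpv, hppv⟩ => by
        have := hp v hv; have := hp (p v) hpv; rw [hppv] at *; omega
      rw [if_pos (parentGraph_adj_parent hv (hp v hv)), if_pos ⟨hv, rfl⟩, if_neg hpp,
        parentSign_mk hp σ hv, add_zero]
    by_cases h₂ : w ≠ r ∧ p w = v
    · obtain ⟨hw, rfl⟩ := h₂
      rw [if_pos (parentGraph_adj_parent hw (hp w hw)).symm, if_neg h₁, if_pos ⟨hw, rfl⟩,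
        Sym2.eq_swap, parentSign_mk hp σ hw, zero_add]
    · simp [parentGraph_adj_iff hp, h₁, h₂]
  rw [signedDegree_eq_sum, Finset.sum_congr rfl fun w _ => hsplit w, Finset.sum_add_distrib,
    Finset.sum_filter]
  congr 1
  by_cases hv : v = r <;> simp [hv]

end SimpleGraph

open SimpleGraph

namespace SignedTree

theorem sdeg_eq_signedDegree (T : SignedTree) (v : Fin T.n) :
    T.sdeg v = @signedDegree _ _ T.G T.adjDec T.sgn v := by
  let := T.adjDec
  have hval : ∀ b, signValue b = (if b = true then 1 else 0) - (if b = false then 1 else 0) := by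
    decide
  simp_rw [signedDegree, hval, Finset.sum_sub_distrib, Finset.sum_boole]
  rfl

theorem exists_range_sdeg_eq_signedDegree {V : Type*} [Fintype V] (G : SimpleGraph V) [DecidableRel G.Adj]
    (hG : G.IsTree) (sgn : Sym2 V → Bool) :
    ∃ T : SignedTree, T.n = Fintype.card V ∧ Set.range T.sdeg = Set.range (G.signedDegree sgn) := by
  let e := (Fintype.equivFin V).symm
  let T : SignedTree :=
    { n := Fintype.card V
      G := G.comap e
      adjDec := fun i j => inferInstanceAs (Decidable (G.Adj (e i) (e j)))
      isTree := (Iso.comap e G).isTree_iff.mpr hG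
      sgn := fun x => sgn (x.map e) }
  have hdeg : T.sdeg = G.signedDegree sgn ∘ e := by
    ext i
    rw [sdeg_eq_signedDegree, signedDegree_eq_sum, Function.comp_apply, signedDegree_eq_sum,
      ← e.sum_comp]
    rfl
  exact ⟨T, rfl, by rw [hdeg, e.surjective.range_comp]⟩

theorem sdeg_eq_one_or_neg_one_of_deg_eq_one (T : SignedTree) {v : Fin T.n} (hv : T.deg v = 1) :
    T.sdeg v = 1 ∨ T.sdeg v = -1 := by
  let := T.adjDec
  obtain ⟨w, hw⟩ := Finset.card_eq_one.mp ((T.G.card_neighborFinset_eq_degree v).trans hv)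
  rw [sdeg_eq_signedDegree, signedDegree, hw, Finset.sum_singleton, signValue]
  split_ifs <;> simp

theorem one_mem_or_neg_one_mem_range_sdeg (T : SignedTree) (hT : 2 ≤ T.n) :
    1 ∈ Set.range T.sdeg ∨ -1 ∈ Set.range T.sdeg := by
  let := T.adjDec
  have : Nontrivial (Fin T.n) := Fin.nontrivial_iff_two_le.mpr hT
  obtain ⟨v, hv⟩ := T.isTree.exists_vert_degree_one_of_nontrivial
  exact (T.sdeg_eq_one_or_neg_one_of_deg_eq_one hv).imp (⟨v, ·⟩) (⟨v, ·⟩)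

def negSigns (T : SignedTree) : SignedTree :=
  { T with sgn := fun e => !T.sgn e }

theorem sdeg_negSigns (T : SignedTree) (v : Fin T.n) : T.negSigns.sdeg v = -T.sdeg v := by
  have hval : ∀ b, signValue (!b) = -signValue b := by decide
  rw [T.sdeg_eq_signedDegree]
  refine (T.negSigns.sdeg_eq_signedDegree v).trans ?_
  simp only [signedDegree, ← Finset.sum_neg_distrib, ← hval]
  rfl

open scoped Pointwise in
theorem Realizes.negSigns {T : SignedTree} {D : Set ℤ} (hT : T.Realizes D) :
    T.negSigns.Realizes (-D) := by
  rw [Realizes, hT, funext T.sdeg_negSigns, Set.neg_range]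
  rfl

end SignedTree

open Finset in
theorem Finset.card_filter_sigma_fst_eq {ι : Type*} [Fintype ι] [DecidableEq ι] {α : ι → Type*}
    [∀ i, Fintype (α i)] (i : ι) :
    #{x : Sigma α | x.1 = i} = Fintype.card (α i) := by
  rw [Finset.card_filter, Fintype.sum_sigma]
  simp [apply_ite]

namespace RealizingTree

variable {γ : Type*} (d : γ → ℤ)

-- Heads `inl i` carry the values `headValue d i` (`i = none` is the extra head of value `1`);
-- heads `inr g` hang from negative edges and only balance the root.
abbrev Branch (γ : Type*) := Option γ ⊕ γ

def headValue : Option γ → ℤ := fun o => o.elim 1 d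

def stemSign : Branch γ → Bool
  | .inl _ => true
  | .inr _ => false

def kidCount : Branch γ → ℕ
  | .inl i => (headValue d i - 1).natAbs
  | .inr _ => 2

def kidSign : Branch γ → Bool
  | .inl i => decide (1 ≤ headValue d i)
  | .inr _ => true

def grandkidCount (t : Branch γ) : ℕ := bif kidSign d t then 0 else 2

abbrev Kid := Σ t : Branch γ, Fin (kidCount d t)

abbrev Grandkid := Σ k : Kid d, Fin (grandkidCount d k.1)

abbrev Vertex := Option (Branch γ ⊕ Kid d ⊕ Grandkid d)

def parent : Vertex d → Vertex d
  | none => none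
  | some (.inl _) => none
  | some (.inr (.inl k)) => some (.inl k.1)
  | some (.inr (.inr g)) => some (.inr (.inl g.1))

def depth : Vertex d → ℕ
  | none => 0
  | some (.inl _) => 1
  | some (.inr (.inl _)) => 2
  | some (.inr (.inr _)) => 3

-- the sign of the edge to the parent; the value at the root is never used
def sign : Vertex d → Bool
  | none => true
  | some (.inl t) => stemSign t
  | some (.inr (.inl k)) => kidSign d k.1
  | some (.inr (.inr _)) => true

theorem depth_parent_lt : ∀ v : Vertex d, v ≠ none → depth d (parent d v) < depth d v := by
  rintro (_ | _ | _ | _) hv <;> simp_all [parent, depth]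

variable [Fintype γ] [DecidableEq γ]

-- instance search does not find this one through `Option`
instance : DecidableEq (Vertex d) := @Option.instDecidableEq _ inferInstance

def degree (v : Vertex d) : ℤ :=
  (if v = none then 0 else signValue (sign d v)) +
    ∑ c with c ≠ none ∧ parent d c = v, signValue (sign d c)

theorem degree_root : degree d none = 1 := by
  rw [degree, if_pos rfl, zero_add, Finset.sum_filter]
  simp [Fintype.sum_option, Fintype.sum_sum_type, parent, sign, stemSign, signValue]

theorem degree_head (t : Branch γ) :
    degree d (some (.inl t)) = signValue (stemSign t) + kidCount d t * signValue (kidSign d t) := by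
  rw [degree, if_neg (Option.some_ne_none _), Finset.sum_filter]
  simp [Fintype.sum_option, Fintype.sum_sum_type, Fintype.sum_sigma, parent, sign]

theorem degree_kid (k : Kid d) : degree d (some (.inr (.inl k))) = 1 := by
  have hgrandkids : ∑ c with c ≠ none ∧ parent d c = some (.inr (.inl k)), signValue (sign d c)
      = grandkidCount d k.1 := by
    rw [Finset.sum_filter]
    simp only [Fintype.sum_option, Fintype.sum_sum_type]
    simp [parent, sign, signValue, Finset.card_filter_sigma_fst_eq]
  rw [degree, if_neg (Option.some_ne_none _), hgrandkids]
  by_cases h : kidSign d k.1 <;> simp [sign, grandkidCount, signValue, h]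

theorem degree_grandkid (g : Grandkid d) : degree d (some (.inr (.inr g))) = 1 := by
  rw [degree, if_neg (Option.some_ne_none _), Finset.sum_filter]
  simp [Fintype.sum_option, Fintype.sum_sum_type, parent, sign, signValue]

theorem degree_head_inl (i : Option γ) : degree d (some (.inl (.inl i))) = headValue d i := by
  rw [degree_head]
  by_cases h : 1 ≤ headValue d i
  · simp [stemSign, kidCount, kidSign, signValue, h, abs_of_nonneg]
  · simp [stemSign, kidCount, kidSign, signValue, h, abs_of_neg (sub_neg.mpr (not_le.mp h))]

theorem degree_head_inr (g : γ) : degree d (some (.inl (.inr g))) = 1 := by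
  rw [degree_head]
  simp [stemSign, kidCount, kidSign, signValue]

theorem range_degree : Set.range (degree d) = insert 1 (Set.range d) := by
  apply Set.Subset.antisymm
  · rintro _ ⟨v, rfl⟩
    rcases v with _ | ((i | g) | k | g)
    · simp [degree_root]
    · cases i <;> simp [degree_head_inl, headValue]
    · simp [degree_head_inr]
    · simp [degree_kid]
    · simp [degree_grandkid]
  · rintro _ (rfl | ⟨i, rfl⟩)
    · exact ⟨none, degree_root d⟩
    · exact ⟨some (.inl (.inl (some i))), degree_head_inl d (some i)⟩

theorem exists_signedTree_range_sdeg :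
    ∃ T : SignedTree, 2 ≤ T.n ∧ Set.range T.sdeg = insert 1 (Set.range d) := by
  classical
  obtain ⟨T, hn, hT⟩ := SignedTree.exists_range_sdeg_eq_signedDegree _
    (parentGraph_isTree (depth_parent_lt d)) (parentSign none (parent d) (sign d))
  refine ⟨T, hn ▸ Fintype.one_lt_card_iff.mpr ⟨none, some (.inl (.inl none)), by simp⟩, ?_⟩
  rw [hT, ← range_degree]
  congr 1
  funext v
  exact signedDegree_parentGraph (depth_parent_lt d) (sign d) v

end RealizingTree

theorem SignedTree.exists_realizes_of_one_mem {D : Set ℤ} (hD : D.Finite) (h1 : 1 ∈ D) :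
    ∃ T : SignedTree, 2 ≤ T.n ∧ T.Realizes D := by
  have := hD.fintype
  obtain ⟨T, hT, hrange⟩ := RealizingTree.exists_signedTree_range_sdeg (Subtype.val : D → ℤ)
  exact ⟨T, hT, by rw [Realizes, hrange, Subtype.range_coe, Set.insert_eq_of_mem h1]⟩

open scoped Pointwise in
theorem SignedTree.exists_realizes_of_neg_one_mem {D : Set ℤ} (hD : D.Finite) (h1 : -1 ∈ D) :
    ∃ T : SignedTree, 2 ≤ T.n ∧ T.Realizes D := by
  obtain ⟨T, hT, hreal⟩ := exists_realizes_of_one_mem (D := -D) hD.neg (by simpa using h1)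
  exact ⟨T.negSigns, hT, by simpa using hreal.negSigns⟩

theorem stmt_0_general (D : Set ℤ) (hfin : D.Finite) :
    (∃ T : SignedTree, 2 ≤ T.n ∧ T.Realizes D) ↔ ((1 : ℤ) ∈ D ∨ (-1 : ℤ) ∈ D) := by
  constructor
  · rintro ⟨T, hT, rfl⟩
    exact T.one_mem_or_neg_one_mem_range_sdeg hT
  · rintro (h1 | h1)
    · exact SignedTree.exists_realizes_of_one_mem hfin h1
    · exact SignedTree.exists_realizes_of_neg_one_mem hfin h1

/-- A finite nonempty set `D` of integers is realized by some signed
tree with at least two vertices iff `1 ∈ D` or `-1 ∈ D`. -/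
theorem stmt_0 (D : Set ℤ) (hfin : D.Finite) (hne : D.Nonempty) :
    (∃ T : SignedTree, 2 ≤ T.n ∧ T.Realizes D) ↔ ((1 : ℤ) ∈ D ∨ (-1 : ℤ) ∈ D) :=
  stmt_0_general D hfin
end

section
/- Let (T,s) be a signed tree whose signed degree set is D, and suppose −1 ∉ D. If v is a vertex of T with negative signed degree, then v is not a pendant vertex and v is not adjacent to any limiting pendant vertex of T. -/
/-- A longest path of the underlying tree of `T`: a path whose length is maximal
among all paths. -/
def SignedTree.IsLongestPath (T : SignedTree) {u v : Fin T.n} (p : T.G.Walk u v) : Prop :=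
  p.IsPath ∧ ∀ (a b : Fin T.n) (q : T.G.Walk a b), q.IsPath → q.length ≤ p.length

/-- A limiting pendant vertex: a pendant vertex that is an endpoint of some
longest path. -/
def SignedTree.IsLimitingPendant (T : SignedTree) (v : Fin T.n) : Prop :=
  T.deg v = 1 ∧ ∃ (u : Fin T.n) (p : T.G.Walk u v), T.IsLongestPath p

namespace SimpleGraph

variable {V : Type*} {G : SimpleGraph V}

theorem exists_adj_ne_of_degree_ne_one {x v : V} [Fintype (G.neighborSet x)]
    (hx : G.degree x ≠ 1) (hxv : G.Adj x v) : ∃ y, G.Adj x y ∧ y ≠ v := by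
  by_contra! h
  exact hx (degree_eq_one_iff_existsUnique_adj.mpr ⟨v, hxv, h⟩)

theorem IsAcyclic.isPath_cons {x v u : V} (hG : G.IsAcyclic) {q : G.Walk v u} (hq : q.IsPath)
    (h : G.Adj x v) (hx : x ≠ q.snd) : (Walk.cons h q).IsPath :=
  (Walk.cons_isPath_iff h q).mpr ⟨hq, fun hmem => hx (hG.eq_snd_of_adj_start hq h.symm hmem)⟩

theorem Walk.IsPath.exists_isPath_of_degree_eq_one {u v w : V} [Fintype (G.neighborSet w)]
    {p : G.Walk u w} (hp : p.IsPath) (hnil : ¬ p.Nil) (hw : G.degree w = 1) (hvw : G.Adj v w) :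
    ∃ q : G.Walk v u, q.IsPath ∧ q.length + 1 = p.length := by
  obtain ⟨z, -, hz⟩ := degree_eq_one_iff_existsUnique_adj.mp hw
  have hpen : p.penultimate = v :=
    (hz _ (p.adj_penultimate hnil).symm).trans (hz v hvw.symm).symm
  rw [← hpen]
  exact ⟨p.dropLast.reverse, hp.dropLast.reverse, by
    rw [Walk.length_reverse, Walk.length_dropLast_add_one hnil]⟩

end SimpleGraph

namespace SignedTree

attribute [local instance] adjDec

open SimpleGraph

variable (T : SignedTree)

def posNbrs (v : Fin T.n) : Finset (Fin T.n) :=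
  (T.G.neighborFinset v).filter fun w => T.sgn s(v, w) = true

def negNbrs (v : Fin T.n) : Finset (Fin T.n) :=
  (T.G.neighborFinset v).filter fun w => T.sgn s(v, w) = false

variable {T}

theorem sdeg_eq_card_sub_card (v : Fin T.n) :
    T.sdeg v = (T.posNbrs v).card - (T.negNbrs v).card := rfl

theorem mem_posNbrs {v w : Fin T.n} : w ∈ T.posNbrs v ↔ T.G.Adj v w ∧ T.sgn s(v, w) = true := by
  simp [posNbrs]

theorem mem_negNbrs {v w : Fin T.n} : w ∈ T.negNbrs v ↔ T.G.Adj v w ∧ T.sgn s(v, w) = false := by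
  simp [negNbrs]

theorem card_posNbrs_add_card_negNbrs (v : Fin T.n) :
    (T.posNbrs v).card + (T.negNbrs v).card = T.deg v := by
  simp only [posNbrs, negNbrs, Bool.eq_false_iff]
  exact Finset.card_filter_add_card_filter_not _

theorem negNbrs_eq_empty_of_deg_eq_one (hT : ∀ t, T.sdeg t ≠ -1) {t : Fin T.n}
    (ht : T.deg t = 1) : T.negNbrs t = ∅ := by
  have hsum := T.card_posNbrs_add_card_negNbrs t
  have hsdeg := hT t
  rw [sdeg_eq_card_sub_card] at hsdeg
  rw [← Finset.card_eq_zero]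
  omega

theorem sgn_eq_true_of_deg_eq_one (hT : ∀ t, T.sdeg t ≠ -1) {t u : Fin T.n} (ht : T.deg t = 1)
    (hu : T.G.Adj t u) : T.sgn s(t, u) = true := by
  by_contra hneg
  have hmem : u ∈ T.negNbrs t := mem_negNbrs.mpr ⟨hu, by simpa using hneg⟩
  simp [negNbrs_eq_empty_of_deg_eq_one hT ht] at hmem

theorem exists_mem_negNbrs_ne {v w : Fin T.n} (hv : T.sdeg v < 0) (hw : w ∈ T.posNbrs v)
    (z : Fin T.n) : ∃ x ∈ T.negNbrs v, x ≠ z := by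
  have hpos : 0 < (T.posNbrs v).card := Finset.card_pos.mpr ⟨w, hw⟩
  rw [sdeg_eq_card_sub_card] at hv
  exact Finset.exists_mem_ne (by omega) z

theorem deg_ne_one_of_sdeg_neg (hT : ∀ t, T.sdeg t ≠ -1) {v : Fin T.n} (hv : T.sdeg v < 0) :
    T.deg v ≠ 1 := fun hv1 => by
  rw [sdeg_eq_card_sub_card, negNbrs_eq_empty_of_deg_eq_one hT hv1, Finset.card_empty] at hv
  omega

theorem not_isLimitingPendant_of_adj (hT : ∀ t, T.sdeg t ≠ -1) {v w : Fin T.n}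
    (hv : T.sdeg v < 0) (hvw : T.G.Adj v w) : ¬ T.IsLimitingPendant w := by
  rintro ⟨hw1, u, p, hp, hmax⟩
  have hwpos : w ∈ T.posNbrs v :=
    mem_posNbrs.mpr ⟨hvw, Sym2.eq_swap ▸ sgn_eq_true_of_deg_eq_one hT hw1 hvw.symm⟩
  have hnil : ¬ p.Nil := Walk.not_nil_iff_lt_length.mpr (hmax v w _ hvw.isPath_toWalk)
  obtain ⟨q, hq, hqlen⟩ := hp.exists_isPath_of_degree_eq_one hnil hw1 hvw
  obtain ⟨x, hx, hxq⟩ := exists_mem_negNbrs_ne hv hwpos q.snd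
  obtain ⟨hvx, hsgn⟩ := mem_negNbrs.mp hx
  have hxdeg : T.deg x ≠ 1 := fun hx1 => by
    simpa [Sym2.eq_swap, hsgn] using sgn_eq_true_of_deg_eq_one hT hx1 hvx.symm
  obtain ⟨y, hxy, hyv⟩ := exists_adj_ne_of_degree_ne_one hxdeg hvx.symm
  have hlonger : (Walk.cons hxy.symm (Walk.cons hvx.symm q)).IsPath :=
    T.isTree.isAcyclic.isPath_cons (T.isTree.isAcyclic.isPath_cons hq hvx.symm hxq) hxy.symm
      (by simpa using hyv)
  have := hmax _ _ _ hlonger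
  simp only [Walk.length_cons] at this
  omega

end SignedTree

/-- In a signed tree whose signed degree set avoids `-1`, a vertex of
negative signed degree is neither pendant nor adjacent to a limiting pendant vertex. -/
theorem stmt_6 (T : SignedTree) (D : Set ℤ) (hreal : T.Realizes D) (hm1 : (-1 : ℤ) ∉ D)
    (v : Fin T.n) (hv : T.sdeg v < 0) :
    T.deg v ≠ 1 ∧ ∀ w : Fin T.n, T.G.Adj v w → ¬ T.IsLimitingPendant w := by
  have hT : ∀ t, T.sdeg t ≠ -1 := fun t ht => hm1 (hreal ▸ ⟨t, ht⟩)
  exact ⟨T.deg_ne_one_of_sdeg_neg hT hv, fun _ hvw => T.not_isLimitingPendant_of_adj hT hv hvw⟩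
end

section
/- Let X = {x_1, ..., x_n} be a nonempty finite set of n distinct integers, each greater than 1, and let D = {1} ∪ X. Then σ(D) = 2 − n + (x_1 + x_2 + ... + x_n). -/
/-!
Signed degrees are bounded by degrees, and the degrees of a tree on `N` vertices sum to
`2 (N - 1)`. If a signed tree realizes `{1} ∪ X`, every signed degree is at least `1`, and
the `n + 1` values of `{1} ∪ X` are attained at distinct vertices, so
`∑ X + 1 + (N - n - 1) ≤ 2 (N - 1)`, i.e. `N ≥ 2 - n + ∑ X`.

Equality is attained by an all-positive tree: start from an edge and, for each `x ∈ X`,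
pick a leaf and graft `x - 1` new leaves onto it. Trees are encoded by parent maps
`p : Fin N → Fin N` that move every vertex other than the root to a smaller index.
-/

open Finset

section parent

variable {V : Type*} {p : V → V}

theorem parent_ne_self_of_rank_lt (rank : V → ℕ) {root : V}
    (hrank : ∀ v, v ≠ root → rank (p v) < rank v) {v : V} (hv : v ≠ root) : p v ≠ v :=
  fun h => (hrank v hv).ne (congrArg rank h)

theorem parent_ne_of_rank_lt (rank : V → ℕ) {root : V} (hroot : p root = root)
    (hrank : ∀ v, v ≠ root → rank (p v) < rank v) {u v : V} (huv : u ≠ v) (hu : p u = v) :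
    p v ≠ u := by
  intro hv
  have hu' : u ≠ root := fun h => huv (by rw [← hu, h, hroot])
  have hv' : v ≠ root := fun h => huv (by rw [← hv, h, hroot])
  exact (hu ▸ hrank u hu').asymm (hv ▸ hrank v hv')

end parent

namespace SimpleGraph

variable {V : Type*} (p : V → V)

def fromParent : SimpleGraph V := fromRel fun u v => p u = v

instance [DecidableEq V] : DecidableRel (fromParent p).Adj :=
  inferInstanceAs (DecidableRel (fromRel fun u v => p u = v).Adj)

variable {p}

theorem fromParent_adj {u v : V} : (fromParent p).Adj u v ↔ u ≠ v ∧ (p u = v ∨ p v = u) :=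
  fromRel_adj ..

theorem fromParent_reachable_of_rank_lt (rank : V → ℕ) {root : V}
    (hrank : ∀ v, v ≠ root → rank (p v) < rank v) (v : V) :
    (fromParent p).Reachable v root := by
  induction h : rank v using Nat.strong_induction_on generalizing v with
  | _ r ih =>
    by_cases hv : v = root
    · exact hv ▸ .rfl
    have hlt := hrank v hv
    have hadj : (fromParent p).Adj v (p v) :=
      fromParent_adj.mpr ⟨fun h => hlt.ne (congrArg rank h).symm, .inl rfl⟩
    exact hadj.reachable.trans (ih _ (h ▸ hlt) _ rfl)

theorem edgeSet_fromParent (rank : V → ℕ) {root : V} (hroot : p root = root)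
    (hrank : ∀ v, v ≠ root → rank (p v) < rank v) :
    (fromParent p).edgeSet = (fun v => s(v, p v)) '' {root}ᶜ := by
  ext e
  constructor
  · refine Sym2.ind (fun a b h => ?_) e
    obtain ⟨hab, rfl | rfl⟩ := fromParent_adj.mp ((mem_edgeSet _).mp h)
    · exact ⟨a, fun h => hab (by rw [h, hroot]), rfl⟩
    · exact ⟨b, fun h => hab (by rw [h, hroot]), Sym2.eq_swap⟩
  · rintro ⟨v, hv, rfl⟩
    exact fromParent_adj.mpr ⟨(parent_ne_self_of_rank_lt rank hrank hv).symm, .inl rfl⟩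

theorem isTree_fromParent [Finite V] (rank : V → ℕ) {root : V} (hroot : p root = root)
    (hrank : ∀ v, v ≠ root → rank (p v) < rank v) : (fromParent p).IsTree := by
  have hinj : Set.InjOn (fun v => s(v, p v)) {root}ᶜ := by
    intro u _ v _ h
    rcases Sym2.eq_iff.mp h with ⟨huv, -⟩ | ⟨hu, hv⟩
    · exact huv
    · by_contra huv
      exact parent_ne_of_rank_lt rank hroot hrank (Ne.symm huv) hu.symm hv
  rw [isTree_iff_connected_and_card]
  refine ⟨(connected_iff_exists_forall_reachable _).mpr
    ⟨root, fun v => (fromParent_reachable_of_rank_lt rank hrank v).symm⟩, ?_⟩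
  rw [Nat.card_coe_set_eq, edgeSet_fromParent rank hroot hrank, hinj.ncard_image, add_comm,
    ← Set.ncard_singleton root, Set.ncard_add_ncard_compl]

theorem degree_fromParent [Fintype V] [DecidableEq V] (rank : V → ℕ) {root : V}
    (hroot : p root = root) (hrank : ∀ v, v ≠ root → rank (p v) < rank v) (v : V) :
    (fromParent p).degree v = #{u | u ≠ v ∧ p u = v} + if v = root then 0 else 1 := by
  have hnbr : (fromParent p).neighborFinset v =
      ({u | u ≠ v ∧ p u = v} : Finset V) ∪ ({u | u ≠ v ∧ p v = u} : Finset V) := by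
    ext u
    simp only [mem_neighborFinset, fromParent_adj, mem_union, mem_filter, mem_univ, true_and,
      ne_comm (a := v)]
    tauto
  have hdisj :
      Disjoint ({u | u ≠ v ∧ p u = v} : Finset V) ({u | u ≠ v ∧ p v = u} : Finset V) := by
    rw [disjoint_filter]
    rintro u - ⟨huv, hu⟩ ⟨-, hv⟩
    exact parent_ne_of_rank_lt rank hroot hrank huv hu hv
  have hparent : ({u | u ≠ v ∧ p v = u} : Finset V) = if v = root then ∅ else {p v} := by
    split_ifs with hv
    · subst hv
      exact filter_false_of_mem fun u _ h => h.1 (hroot ▸ h.2).symm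
    · ext u
      simp only [mem_filter, mem_univ, true_and, mem_singleton]
      exact ⟨fun h => h.2.symm, fun h => ⟨h ▸ parent_ne_self_of_rank_lt rank hrank hv, h.symm⟩⟩
  rw [degree, hnbr, card_union_of_disjoint hdisj, hparent]
  split_ifs <;> rfl

end SimpleGraph

open SimpleGraph

section graft

variable {N : ℕ} (p : Fin N → Fin N) (ℓ : Fin N) (k : ℕ)

def graftLeaves : Fin (N + k) → Fin (N + k) :=
  Fin.addCases (fun i => Fin.castAdd k (p i)) fun _ => Fin.castAdd k ℓ

@[simp] theorem graftLeaves_castAdd (i : Fin N) :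
    graftLeaves p ℓ k (Fin.castAdd k i) = Fin.castAdd k (p i) :=
  Fin.addCases_left i

@[simp] theorem graftLeaves_natAdd (j : Fin k) :
    graftLeaves p ℓ k (Fin.natAdd N j) = Fin.castAdd k ℓ :=
  Fin.addCases_right j

variable {p ℓ k} {root : Fin N}

theorem graftLeaves_lt (hrank : ∀ v, v ≠ root → p v < v) (v : Fin (N + k))
    (hv : v ≠ Fin.castAdd k root) : graftLeaves p ℓ k v < v := by
  induction v using Fin.addCases with
  | left i =>
    rw [graftLeaves_castAdd, Fin.lt_def, Fin.val_castAdd, Fin.val_castAdd]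
    exact hrank i (fun h => hv (h ▸ rfl))
  | right j =>
    rw [graftLeaves_natAdd, Fin.lt_def]
    simp only [Fin.val_castAdd, Fin.val_natAdd]
    omega

theorem card_children_graftLeaves_castAdd (v : Fin N) :
    #{u | u ≠ Fin.castAdd k v ∧ graftLeaves p ℓ k u = Fin.castAdd k v} =
      #{u | u ≠ v ∧ p u = v} + if ℓ = v then k else 0 := by
  simp only [card_filter, Fin.sum_univ_add, graftLeaves_castAdd, graftLeaves_natAdd, ne_eq,
    Fin.ext_iff, Fin.val_castAdd, Fin.val_natAdd]
  congr 1
  split_ifs with h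
  · rw [sum_congr rfl fun x _ => if_pos ⟨by omega, h⟩]
    simp
  · simp [h]

theorem card_children_graftLeaves_natAdd (j : Fin k) :
    #{u | u ≠ Fin.natAdd N j ∧ graftLeaves p ℓ k u = Fin.natAdd N j} = 0 := by
  simp only [card_filter, Fin.sum_univ_add, graftLeaves_castAdd, graftLeaves_natAdd, ne_eq,
    Fin.ext_iff, Fin.val_castAdd, Fin.val_natAdd]
  rw [sum_eq_zero fun x _ => if_neg (by omega), sum_eq_zero fun x _ => if_neg (by omega),
    add_zero]

theorem degree_graftLeaves_castAdd (hroot : p root = root) (hrank : ∀ v, v ≠ root → p v < v)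
    (v : Fin N) :
    (fromParent (graftLeaves p ℓ k)).degree (Fin.castAdd k v) =
      (fromParent p).degree v + if ℓ = v then k else 0 := by
  rw [degree_fromParent Fin.val (root := Fin.castAdd k root) (by simp [hroot])
      (graftLeaves_lt hrank), degree_fromParent Fin.val hroot hrank,
    card_children_graftLeaves_castAdd]
  simp only [Fin.castAdd_inj]
  omega

theorem degree_graftLeaves_natAdd (hroot : p root = root) (hrank : ∀ v, v ≠ root → p v < v)
    (j : Fin k) :
    (fromParent (graftLeaves p ℓ k)).degree (Fin.natAdd N j) = 1 := by
  rw [degree_fromParent Fin.val (root := Fin.castAdd k root) (by simp [hroot])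
      (graftLeaves_lt hrank), card_children_graftLeaves_natAdd, if_neg]
  simp only [Fin.ext_iff, Fin.val_castAdd, Fin.val_natAdd]
  omega

theorem range_degree_graftLeaves (hroot : p root = root) (hrank : ∀ v, v ≠ root → p v < v)
    (hℓ : (fromParent p).degree ℓ = 1) (hk : k ≠ 0) :
    Set.range (fun v => (fromParent (graftLeaves p ℓ k)).degree v) =
      insert (k + 1) (Set.range fun v => (fromParent p).degree v) := by
  ext d
  simp only [Set.mem_range, Set.mem_insert_iff]
  constructor
  · rintro ⟨v, rfl⟩
    induction v using Fin.addCases with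
    | left v =>
      rw [degree_graftLeaves_castAdd hroot hrank]
      by_cases h : ℓ = v
      · subst h
        left
        rw [hℓ, if_pos rfl, add_comm]
      · exact .inr ⟨v, by rw [if_neg h, add_zero]⟩
    | right j => exact .inr ⟨ℓ, by rw [degree_graftLeaves_natAdd hroot hrank, hℓ]⟩
  · rintro (rfl | ⟨v, rfl⟩)
    · exact ⟨Fin.castAdd k ℓ,
        by rw [degree_graftLeaves_castAdd hroot hrank, hℓ, if_pos rfl, add_comm]⟩
    · by_cases h : ℓ = v
      · subst h
        exact ⟨Fin.natAdd N ⟨0, Nat.pos_of_ne_zero hk⟩,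
          by rw [degree_graftLeaves_natAdd hroot hrank, hℓ]⟩
      · exact ⟨Fin.castAdd k v,
          by rw [degree_graftLeaves_castAdd hroot hrank, if_neg h, add_zero]⟩

end graft

theorem exists_fromParent_range_degree_eq_insert_one (X : Finset ℤ) (hX : ∀ x ∈ X, 1 < x) :
    ∃ (N : ℕ) (p : Fin N → Fin N) (root : Fin N),
      p root = root ∧ (∀ v, v ≠ root → p v < v) ∧
      Set.range (fun v => ((fromParent p).degree v : ℤ)) = insert 1 ↑X ∧
      (N : ℤ) = ∑ x ∈ X, x - #X + 2 := by
  induction X using Finset.induction_on with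
  | empty =>
    refine ⟨2, fun _ => 0, 0, rfl, fun v hv => Fin.pos_iff_ne_zero.mpr hv, ?_, rfl⟩
    have hdeg : ∀ v, (fromParent (fun _ : Fin 2 => 0)).degree v = 1 := by decide
    simp [hdeg]
  | insert a X ha ih =>
    obtain ⟨N, p, root, hroot, hrank, hrange, hN⟩ := ih fun x hx => hX x (mem_insert_of_mem hx)
    obtain ⟨ℓ, hℓ⟩ : 1 ∈ Set.range fun v => ((fromParent p).degree v : ℤ) :=
      hrange ▸ Set.mem_insert 1 _
    replace hℓ : (fromParent p).degree ℓ = 1 := Nat.cast_eq_one.mp hℓ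
    have ha1 : 1 < a := hX a (mem_insert_self a X)
    obtain ⟨k, rfl⟩ : ∃ k : ℕ, a = k + 1 := ⟨(a - 1).toNat, by omega⟩
    refine ⟨N + k, graftLeaves p ℓ k, Fin.castAdd k root, by simp [hroot],
      graftLeaves_lt hrank, ?_, ?_⟩
    · rw [Set.range_comp' (fun d : ℕ => (d : ℤ)),
        range_degree_graftLeaves hroot hrank hℓ (by omega), Set.image_insert_eq,
        ← Set.range_comp', hrange, coe_insert, Set.insert_comm]
      push_cast
      rfl
    · rw [sum_insert ha, card_insert_of_notMem ha]
      push_cast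
      omega

namespace SignedTree

def ofParent {N : ℕ} (p : Fin N → Fin N) {root : Fin N} (hroot : p root = root)
    (hrank : ∀ v, v ≠ root → p v < v) : SignedTree where
  n := N
  G := fromParent p
  adjDec := inferInstance
  isTree := isTree_fromParent Fin.val hroot hrank
  sgn := fun _ => true

theorem sdeg_eq_deg_of_sgn_eq_true (T : SignedTree) (hs : ∀ e, T.sgn e = true) (v : Fin T.n) :
    T.sdeg v = T.deg v := by
  simp [sdeg, deg, hs]

theorem sdeg_le_deg (T : SignedTree) (v : Fin T.n) : T.sdeg v ≤ T.deg v := by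
  let := T.adjDec
  have := card_filter_le (T.G.neighborFinset v) fun w => T.sgn s(v, w) = true
  simp only [sdeg, deg, ← card_neighborFinset_eq_degree]
  omega

theorem sum_deg_add_two (T : SignedTree) : ∑ v, T.deg v + 2 = 2 * T.n := by
  let := T.adjDec
  have := T.isTree.card_edgeFinset
  rw [Fintype.card_fin] at this
  change ∑ v, T.G.degree v + 2 = 2 * T.n
  rw [sum_degrees_eq_twice_card_edges]
  omega

theorem exists_realizes_insert_one (X : Finset ℤ) (hX : ∀ x ∈ X, 1 < x) :
    ∃ T : SignedTree, T.Realizes (insert 1 ↑X) ∧ (T.n : ℤ) = ∑ x ∈ X, x - #X + 2 := by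
  obtain ⟨N, p, root, hroot, hrank, hrange, hN⟩ :=
    exists_fromParent_range_degree_eq_insert_one X hX
  refine ⟨ofParent p hroot hrank, ?_, hN⟩
  rw [Realizes, ← hrange]
  exact congrArg Set.range
    (funext (sdeg_eq_deg_of_sgn_eq_true (ofParent p hroot hrank) fun _ => rfl)) |>.symm

theorem sum_image_sdeg_sub_one_add_two_le (T : SignedTree) (hpos : ∀ v, 1 ≤ T.sdeg v) :
    ∑ d ∈ univ.image T.sdeg, (d - 1) + 2 ≤ T.n := by
  have hnonneg : ∀ d ∈ univ.image T.sdeg, 0 ≤ d - 1 := by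
    simp only [mem_image, mem_univ, true_and, forall_exists_index, forall_apply_eq_imp_iff]
    exact fun v => sub_nonneg.mpr (hpos v)
  have hsum : ∑ v, (T.deg v : ℤ) + 2 = 2 * T.n := by exact_mod_cast T.sum_deg_add_two
  calc ∑ d ∈ univ.image T.sdeg, (d - 1) + 2
      ≤ ∑ v, (T.sdeg v - 1) + 2 := by gcongr; exact sum_image_le_of_nonneg hnonneg
    _ ≤ ∑ v, ((T.deg v : ℤ) - 1) + 2 := by gcongr; exact T.sdeg_le_deg _
    _ = T.n := by
      rw [sum_sub_distrib, sum_const, card_univ, Fintype.card_fin, nsmul_one]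
      omega

theorem sum_sub_card_add_two_le_of_realizes {X : Finset ℤ} (hX : ∀ x ∈ X, 1 < x)
    {T : SignedTree} (hT : T.Realizes (insert 1 ↑X)) : ∑ x ∈ X, x - #X + 2 ≤ T.n := by
  have himage : univ.image T.sdeg = insert 1 X := by
    apply coe_injective
    rw [coe_image, coe_univ, Set.image_univ, ← hT, coe_insert]
  have hpos : ∀ v, 1 ≤ T.sdeg v := by
    intro v
    rcases mem_insert.mp (himage ▸ mem_image_of_mem T.sdeg (mem_univ v)) with h | h
    · exact h.ge
    · exact (hX _ h).le
  have h1 : (1 : ℤ) ∉ X := fun h => (hX 1 h).false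
  have := T.sum_image_sdeg_sub_one_add_two_le hpos
  rwa [himage, sum_insert h1, sub_self, zero_add, sum_sub_distrib, sum_const, nsmul_one] at this

end SignedTree

theorem orderOfSet_eq {D : Set ℤ} {T : SignedTree} (hT : T.Realizes D)
    (hmin : ∀ T' : SignedTree, T'.Realizes D → T.n ≤ T'.n) : orderOfSet D = T.n :=
  le_antisymm (Nat.sInf_le ⟨T, hT, rfl⟩)
    (le_csInf ⟨T.n, T, hT, rfl⟩ fun _ ⟨T', hT', h⟩ => h ▸ hmin T' hT')

theorem stmt_11_general (n : ℕ) (X : Finset ℤ) (hcard : X.card = n)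
    (hx : ∀ x ∈ X, 1 < x) (D : Set ℤ) (hD : D = insert 1 (↑X : Set ℤ)) :
    (orderOfSet D : ℤ) = 2 - (n : ℤ) + ∑ x ∈ X, x := by
  subst hD hcard
  obtain ⟨T, hT, hTn⟩ := SignedTree.exists_realizes_insert_one X hx
  have hmin (T' : SignedTree) (hT' : T'.Realizes (insert 1 ↑X)) : T.n ≤ T'.n := by
    have := SignedTree.sum_sub_card_add_two_le_of_realizes hx hT'
    omega
  rw [orderOfSet_eq hT hmin, hTn]
  ring

/-- For `D = {1} ∪ X` with `X` a nonempty set of `n` distinct integers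
each greater than 1: `σ(D) = 2 - n + ∑ x ∈ X, x`. -/
theorem stmt_11 (n : ℕ) (X : Finset ℤ) (hcard : X.card = n) (hne : X.Nonempty)
    (hx : ∀ x ∈ X, 1 < x) (D : Set ℤ) (hD : D = insert 1 (↑X : Set ℤ)) :
    (orderOfSet D : ℤ) = 2 - (n : ℤ) + ∑ x ∈ X, x :=
  stmt_11_general n X hcard hx D hD
end

section
/- Let X = {x_1, ..., x_n} be a finite set of distinct integers each greater than 1, let D = {1, 0} ∪ X, and let (T,s) be a signed tree realizing D whose underlying tree has the minimum possible number of vertices among all signed trees realizing D. Then T has exactly one edge e with s(e) = −. -/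
namespace SimpleGraph

variable {V : Type*}

theorem sum_ncard_neighborSet [Fintype V] (G : SimpleGraph V) :
    ∑ v, (G.neighborSet v).ncard = 2 * G.edgeSet.ncard := by
  classical
  simpa [← card_neighborFinset_eq_degree, ← Set.ncard_coe_finset, ← coe_edgeFinset]
    using G.sum_degrees_eq_twice_card_edges

theorem IsTree.ncard_edgeSet_add_one [Finite V] {G : SimpleGraph V} (h : G.IsTree) :
    G.edgeSet.ncard + 1 = Nat.card V := by
  rw [← Nat.card_coe_set_eq]
  exact (isTree_iff_connected_and_card.mp h).2

end SimpleGraph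

open Classical in
theorem Fin.ncard_eq_ncard_preimage_castSucc_add {n : ℕ} (S : Set (Fin (n + 1))) :
    S.ncard = (Fin.castSucc ⁻¹' S).ncard + if Fin.last n ∈ S then 1 else 0 := by
  have ncard_eq_sum {k : ℕ} (S : Set (Fin k)) : S.ncard = ∑ a, if a ∈ S then 1 else 0 := by
    rw [← Finset.card_filter, Set.ncard_eq_toFinset_card']
    congr
    ext
    simp
  rw [ncard_eq_sum, ncard_eq_sum, Fin.sum_univ_castSucc]
  rfl

namespace SignedTree

section SignDegrees

variable (T : SignedTree)

def signGraph (b : Bool) : SimpleGraph (Fin T.n) where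
  Adj v w := T.G.Adj v w ∧ T.sgn s(v, w) = b
  symm := ⟨fun _ _ h => ⟨h.1.symm, Sym2.eq_swap ▸ h.2⟩⟩
  loopless := ⟨fun v h => T.G.loopless.irrefl v h.1⟩

noncomputable def signDeg (b : Bool) (v : Fin T.n) : ℕ :=
  ((T.signGraph b).neighborSet v).ncard

theorem edgeSet_signGraph (b : Bool) :
    (T.signGraph b).edgeSet = {e | e ∈ T.G.edgeSet ∧ T.sgn e = b} := by
  ext e
  induction e using Sym2.ind
  rfl

theorem sdeg_eq_signDeg_sub (v : Fin T.n) :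
    T.sdeg v = T.signDeg true v - T.signDeg false v := by
  let := T.adjDec
  simp only [sdeg, signDeg, ← Set.ncard_coe_finset]
  congr <;> ext w <;> simp [signGraph]

theorem signDeg_true_add_signDeg_false (v : Fin T.n) :
    T.signDeg true v + T.signDeg false v = (T.G.neighborSet v).ncard := by
  rw [signDeg, signDeg, ← Set.ncard_union_eq]
  · congr 1
    ext w
    cases h : T.sgn s(v, w) <;> simp [signGraph, h]
  · exact Set.disjoint_left.mpr fun w h1 h2 => by simp_all [signGraph]

theorem sum_signDeg (b : Bool) :
    ∑ v, T.signDeg b v = 2 * (T.signGraph b).edgeSet.ncard :=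
  (T.signGraph b).sum_ncard_neighborSet

theorem ncard_edgeSet_signGraph_true_add_false :
    (T.signGraph true).edgeSet.ncard + (T.signGraph false).edgeSet.ncard + 1 = T.n := by
  have := T.isTree.ncard_edgeSet_add_one
  rw [Nat.card_fin] at this
  rw [← Set.ncard_union_eq]
  · convert this using 3
    ext e
    cases h : T.sgn e <;> simp [edgeSet_signGraph, h]
  · exact Set.disjoint_left.mpr fun e h1 h2 => by simp_all [edgeSet_signGraph]

theorem one_le_signDeg_true {v : Fin T.n} (hn : 2 ≤ T.n) (hv : 0 ≤ T.sdeg v) :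
    1 ≤ T.signDeg true v := by
  have : Nontrivial (Fin T.n) := Fin.nontrivial_iff_two_le.mpr hn
  obtain ⟨w, hw⟩ := T.isTree.connected.preconnected.exists_adj_of_nontrivial v
  have hdeg : 1 ≤ (T.G.neighborSet v).ncard := (Set.ncard_pos (Set.toFinite _)).mpr ⟨w, hw⟩
  have := T.signDeg_true_add_signDeg_false v
  have := T.sdeg_eq_signDeg_sub v
  omega

theorem n_add_sum_sub_one_le (hpos : ∀ v, 1 ≤ T.signDeg true v) {X : Finset ℤ}
    (hX : ↑X ⊆ Set.range T.sdeg) :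
    (T.n : ℤ) + ∑ x ∈ X, (x - 1) ≤ 2 * (T.signGraph true).edgeSet.ncard := by
  classical
  obtain ⟨A, hA, hinj⟩ := Set.exists_image_eq_injOn_of_subset_range hX
  have hXA : X = A.toFinset.image T.sdeg := by
    rw [← Finset.coe_inj]
    simpa using hA.symm
  rw [hXA, Finset.sum_image (by simpa using hinj)]
  calc (T.n : ℤ) + ∑ v ∈ A.toFinset, (T.sdeg v - 1)
      ≤ T.n + ∑ v ∈ A.toFinset, ((T.signDeg true v : ℤ) - 1) := by
        gcongr with v
        rw [sdeg_eq_signDeg_sub]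
        omega
    _ ≤ T.n + ∑ v : Fin T.n, ((T.signDeg true v : ℤ) - 1) := by
        have := Finset.sum_le_univ_sum_of_nonneg (s := A.toFinset)
          (f := fun v => (T.signDeg true v : ℤ) - 1) fun v => by have := hpos v; omega
        linarith
    _ = 2 * (T.signGraph true).edgeSet.ncard := by
        rw [Finset.sum_sub_distrib]
        simp only [Finset.sum_const, Finset.card_univ, Fintype.card_fin, nsmul_one]
        have := congrArg (Nat.cast : ℕ → ℤ) (T.sum_signDeg true)
        push_cast at this
        linarith

theorem edgeSet_signGraph_false_nonempty {v : Fin T.n} (hn : 2 ≤ T.n) (hv : T.sdeg v = 0) :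
    (T.signGraph false).edgeSet.Nonempty := by
  have hpos := T.one_le_signDeg_true hn hv.ge
  have hneg : 0 < T.signDeg false v := by
    have := T.sdeg_eq_signDeg_sub v
    omega
  obtain ⟨w, hw⟩ := (Set.ncard_pos (Set.toFinite _)).mp hneg
  exact ⟨s(v, w), hw⟩

end SignDegrees

section AddLeaf

variable (T : SignedTree)

def addLeafGraph (v : Fin T.n) : SimpleGraph (Fin (T.n + 1)) :=
  T.G.map Fin.castSuccEmb ⊔ SimpleGraph.edge v.castSucc (Fin.last T.n)

theorem addLeafGraph_connected (v : Fin T.n) : (T.addLeafGraph v).Connected := by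
  have hv (a : Fin (T.n + 1)) : (T.addLeafGraph v).Reachable a v.castSucc := by
    induction a using Fin.lastCases with
    | last =>
      refine SimpleGraph.Adj.reachable (Or.inr ?_)
      simp [SimpleGraph.edge_adj, (Fin.castSucc_lt_last v).ne']
    | cast w =>
      let f : T.G →g T.addLeafGraph v := (SimpleGraph.Hom.ofLE le_sup_left).comp
        (SimpleGraph.Embedding.map Fin.castSuccEmb T.G).toHom
      exact (T.isTree.connected.preconnected w v).map f
  exact (SimpleGraph.connected_iff_exists_forall_reachable _).mpr
    ⟨v.castSucc, fun a => (hv a).symm⟩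

theorem ncard_edgeSet_addLeafGraph (v : Fin T.n) :
    (T.addLeafGraph v).edgeSet.ncard = T.G.edgeSet.ncard + 1 := by
  rw [addLeafGraph, SimpleGraph.edgeSet_sup, SimpleGraph.edgeSet_map,
    SimpleGraph.edgeSet_edge_of_ne (Fin.castSucc_lt_last v).ne, Set.ncard_union_eq,
    Set.ncard_image_of_injective _ Fin.castSuccEmb.sym2Map.injective, Set.ncard_singleton]
  rw [Set.disjoint_singleton_right]
  rintro ⟨e, -, he⟩
  have : Fin.last T.n ∈ Fin.castSuccEmb.sym2Map e := he ▸ Sym2.mem_mk_right _ _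
  obtain ⟨a, -, ha⟩ := Sym2.mem_map.mp this
  exact (Fin.castSucc_lt_last a).ne ha

theorem addLeafGraph_isTree (v : Fin T.n) : (T.addLeafGraph v).IsTree := by
  rw [SimpleGraph.isTree_iff_connected_and_card, Nat.card_coe_set_eq, Nat.card_fin,
    ncard_edgeSet_addLeafGraph, T.isTree.ncard_edgeSet_add_one, Nat.card_fin]
  exact ⟨T.addLeafGraph_connected v, rfl⟩

/-- The new edge gets sign `b`; the old edges keep their signs, read through the retraction
`Fin (T.n + 1) → Fin T.n` sending the new vertex `Fin.last T.n` to `v`. -/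
@[reducible] noncomputable def addLeaf (v : Fin T.n) (b : Bool) : SignedTree where
  n := T.n + 1
  G := T.addLeafGraph v
  adjDec := Classical.decRel _
  isTree := T.addLeafGraph_isTree v
  sgn e := if Fin.last T.n ∈ e then b
    else T.sgn (e.map (Fin.lastCases (motive := fun _ => Fin T.n) v id))

variable {T} {v : Fin T.n} {b : Bool}

@[simp]
theorem addLeafGraph_adj_castSucc {u w : Fin T.n} :
    (T.addLeafGraph v).Adj u.castSucc w.castSucc ↔ T.G.Adj u w := by
  simp only [addLeafGraph, SimpleGraph.sup_adj, SimpleGraph.map_adj]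
  simp [SimpleGraph.edge_adj, Fin.castSucc_ne_last]

@[simp]
theorem addLeafGraph_adj_castSucc_last {u : Fin T.n} :
    (T.addLeafGraph v).Adj u.castSucc (Fin.last T.n) ↔ u = v := by
  simp only [addLeafGraph, SimpleGraph.sup_adj, SimpleGraph.map_adj]
  simp [SimpleGraph.edge_adj, Fin.castSucc_ne_last]

@[simp]
theorem addLeafGraph_adj_last {a : Fin (T.n + 1)} :
    (T.addLeafGraph v).Adj (Fin.last T.n) a ↔ a = v.castSucc := by
  induction a using Fin.lastCases with
  | last => simp [(Fin.castSucc_ne_last v).symm]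
  | cast w => rw [SimpleGraph.adj_comm]; simp [eq_comm]

theorem signDeg_addLeaf_castSucc (c : Bool) (u : Fin T.n) :
    (T.addLeaf v b).signDeg c u.castSucc = T.signDeg c u + if u = v ∧ b = c then 1 else 0 := by
  rw [signDeg, signDeg, Fin.ncard_eq_ncard_preimage_castSucc_add]
  congr 1
  · congr 1
    ext w
    simp [signGraph, eq_comm (a := Fin.last T.n), Fin.castSucc_ne_last]
  · simp [signGraph]

theorem signDeg_addLeaf_last (c : Bool) :
    (T.addLeaf v b).signDeg c (Fin.last T.n) = if b = c then 1 else 0 := by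
  rw [signDeg, Fin.ncard_eq_ncard_preimage_castSucc_add]
  cases b <;> cases c <;> simp [signGraph, Set.preimage]

theorem sdeg_addLeaf_castSucc_self :
    (T.addLeaf v b).sdeg v.castSucc = T.sdeg v + if b then 1 else -1 := by
  rw [sdeg_eq_signDeg_sub, sdeg_eq_signDeg_sub, signDeg_addLeaf_castSucc,
    signDeg_addLeaf_castSucc]
  cases b <;> simp <;> ring

theorem sdeg_addLeaf_castSucc_of_ne {u : Fin T.n} (hu : u ≠ v) :
    (T.addLeaf v b).sdeg u.castSucc = T.sdeg u := by
  rw [sdeg_eq_signDeg_sub, sdeg_eq_signDeg_sub, signDeg_addLeaf_castSucc,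
    signDeg_addLeaf_castSucc]
  simp [hu]

theorem sdeg_addLeaf_last : (T.addLeaf v b).sdeg (Fin.last T.n) = if b then 1 else -1 := by
  rw [sdeg_eq_signDeg_sub, signDeg_addLeaf_last, signDeg_addLeaf_last]
  cases b <;> simp

theorem image_sdeg_addLeaf_compl_castSucc :
    (T.addLeaf v b).sdeg '' {v.castSucc}ᶜ = insert (if b then 1 else -1) (T.sdeg '' {v}ᶜ) := by
  ext d
  constructor
  · rintro ⟨a, ha, rfl⟩
    induction a using Fin.lastCases with
    | last => exact .inl sdeg_addLeaf_last
    | cast u =>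
      have hu : u ≠ v := fun h => ha (h ▸ rfl)
      exact .inr ⟨u, hu, (sdeg_addLeaf_castSucc_of_ne hu).symm⟩
  · rintro (rfl | ⟨u, hu, rfl⟩)
    · exact ⟨_, (Fin.castSucc_ne_last v).symm, sdeg_addLeaf_last⟩
    · exact ⟨u.castSucc, by simpa using hu, sdeg_addLeaf_castSucc_of_ne hu⟩

theorem image_sdeg_addLeaf_compl_last :
    (T.addLeaf v b).sdeg '' {Fin.last T.n}ᶜ =
      insert (T.sdeg v + if b then 1 else -1) (T.sdeg '' {v}ᶜ) := by
  ext d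
  constructor
  · rintro ⟨a, ha, rfl⟩
    induction a using Fin.lastCases with
    | last => exact absurd rfl ha
    | cast u =>
      by_cases hu : u = v
      · exact .inl (hu ▸ sdeg_addLeaf_castSucc_self)
      · exact .inr ⟨u, hu, (sdeg_addLeaf_castSucc_of_ne hu).symm⟩
  · rintro (rfl | ⟨u, hu, rfl⟩)
    · exact ⟨_, Fin.castSucc_ne_last v, sdeg_addLeaf_castSucc_self⟩
    · exact ⟨_, Fin.castSucc_ne_last u, sdeg_addLeaf_castSucc_of_ne hu⟩

end AddLeaf

section Realizations

@[reducible] def singleVertex : SignedTree where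
  n := 1
  G := ⊥
  adjDec := inferInstance
  isTree := .of_subsingleton
  sgn _ := true

theorem sdeg_singleVertex (v : Fin singleVertex.n) : singleVertex.sdeg v = 0 := by
  simp [sdeg_eq_signDeg_sub, signDeg, signGraph]

theorem image_sdeg_singleVertex_compl (v : Fin singleVertex.n) :
    singleVertex.sdeg '' {v}ᶜ = ∅ := by
  ext
  simp [Subsingleton.elim _ v]

theorem exists_realizes_one_zero : ∃ T : SignedTree, T.n = 4 ∧ T.Realizes {1, 0} := by
  let T₂ := singleVertex.addLeaf 0 true
  let T₃ := T₂.addLeaf (Fin.last _) false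
  refine ⟨T₃.addLeaf (Fin.last _) true, rfl, ?_⟩
  rw [Realizes, ← Set.insert_image_compl_eq_range _ (Fin.last _), sdeg_addLeaf_last,
    image_sdeg_addLeaf_compl_last, sdeg_addLeaf_last, image_sdeg_addLeaf_compl_last,
    sdeg_addLeaf_last, image_sdeg_addLeaf_compl_last, sdeg_singleVertex,
    image_sdeg_singleVertex_compl]
  norm_num [Set.pair_comm]

theorem exists_addLeaves (T : SignedTree) (v : Fin T.n) (k : ℕ) :
    ∃ (T' : SignedTree) (v' : Fin T'.n), T'.n = T.n + (k + 1) ∧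
      T'.sdeg v' = T.sdeg v + (k + 1) ∧ T'.sdeg '' {v'}ᶜ = insert 1 (T.sdeg '' {v}ᶜ) := by
  induction k with
  | zero =>
    refine ⟨T.addLeaf v true, v.castSucc, rfl, ?_, ?_⟩
    · simp [sdeg_addLeaf_castSucc_self]
    · rw [image_sdeg_addLeaf_compl_castSucc]
      rfl
  | succ k ih =>
    obtain ⟨T', v', hn, hv, himage⟩ := ih
    refine ⟨T'.addLeaf v' true, v'.castSucc, by simp [hn]; ring, ?_, ?_⟩
    · simp [sdeg_addLeaf_castSucc_self, hv]; ring
    · rw [image_sdeg_addLeaf_compl_castSucc, himage]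
      simp

theorem Realizes.exists_realizes_insert {T : SignedTree} {D : Set ℤ} (hT : T.Realizes D)
    (h1 : 1 ∈ D) (k : ℕ) :
    ∃ T' : SignedTree, T'.n = T.n + (k + 1) ∧ T'.Realizes (insert ((k : ℤ) + 2) D) := by
  obtain ⟨v, hv⟩ : 1 ∈ Set.range T.sdeg := hT ▸ h1
  obtain ⟨T', v', hn, hv', himage⟩ := T.exists_addLeaves v k
  refine ⟨T', hn, ?_⟩
  rw [Realizes, hT, ← Set.insert_image_compl_eq_range T'.sdeg v', hv', himage,
    ← Set.insert_image_compl_eq_range T.sdeg v, hv]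
  ring_nf

theorem exists_realizes_insert_one_insert_zero (X : Finset ℤ) (hX : ∀ x ∈ X, 1 < x) :
    ∃ T : SignedTree, T.Realizes (insert 1 (insert 0 ↑X)) ∧ (T.n : ℤ) = ∑ x ∈ X, (x - 1) + 4 := by
  induction X using Finset.induction_on with
  | empty =>
    obtain ⟨T, hn, hT⟩ := exists_realizes_one_zero
    exact ⟨T, by simpa using hT, by simp [hn]⟩
  | insert a s ha ih =>
    obtain ⟨T, hT, hn⟩ := ih fun x hx => hX x (Finset.mem_insert_of_mem hx)
    have ha1 : 1 < a := hX a (Finset.mem_insert_self a s)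
    obtain ⟨T', hn', hT'⟩ := hT.exists_realizes_insert (by simp) (a - 2).toNat
    refine ⟨T', ?_, ?_⟩
    · convert hT' using 1
      rw [Int.toNat_of_nonneg (by omega), Finset.coe_insert]
      simp only [sub_add_cancel, Set.insert_comm a]
    · rw [hn', Finset.sum_insert ha]
      push_cast
      omega

end Realizations

end SignedTree

/-- In an order-optimal signed tree realizing `D = {1, 0} ∪ X`
(`X` a set of distinct integers each greater than 1), there is exactly one negative edge. -/
theorem stmt_13 (X : Finset ℤ) (hx : ∀ x ∈ X, 1 < x)
    (D : Set ℤ) (hD : D = insert 1 (insert 0 (↑X : Set ℤ)))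
    (T : SignedTree) (hreal : T.Realizes D)
    (hopt : ∀ T' : SignedTree, T'.Realizes D → T.n ≤ T'.n) :
    ∃! e : Sym2 (Fin T.n), e ∈ T.G.edgeSet ∧ T.sgn e = false := by
  subst hD
  obtain ⟨T', hT', hn'⟩ := SignedTree.exists_realizes_insert_one_insert_zero X hx
  have hsmall : (T.n : ℤ) ≤ ∑ x ∈ X, (x - 1) + 4 := hn' ▸ mod_cast hopt T' hT'
  obtain ⟨v₀, hv₀⟩ : (0 : ℤ) ∈ Set.range T.sdeg := hreal ▸ by simp
  obtain ⟨v₁, hv₁⟩ : (1 : ℤ) ∈ Set.range T.sdeg := hreal ▸ by simp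
  have hn : 2 ≤ T.n := Fin.nontrivial_iff_two_le.mp ⟨v₀, v₁, fun h => by simp [h, hv₁] at hv₀⟩
  have hnonneg (v : Fin T.n) : 0 ≤ T.sdeg v := by
    have : T.sdeg v ∈ insert 1 (insert 0 (X : Set ℤ)) := hreal ▸ Set.mem_range_self v
    rcases this with h | h | h
    · omega
    · omega
    · exact (hx _ h).le.trans' zero_le_one
  have hlower := T.n_add_sum_sub_one_le (fun v => T.one_le_signDeg_true hn (hnonneg v))
    (X := X) (hreal ▸ (Set.subset_insert _ _).trans (Set.subset_insert _ _))
  have hneg := (Set.ncard_pos (Set.toFinite _)).mpr (T.edgeSet_signGraph_false_nonempty hn hv₀)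
  have hedges := T.ncard_edgeSet_signGraph_true_add_false
  obtain ⟨e, he⟩ := Set.ncard_eq_one.mp (show (T.signGraph false).edgeSet.ncard = 1 by omega)
  rw [SignedTree.edgeSet_signGraph, Set.ext_iff] at he
  exact ⟨e, (he e).mpr rfl, fun e' he' => (he e').mp he'⟩
end
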